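/- arXiv:2104.00387 — 2 statements merged into one kernel-verified Lean document; each statement's English description precedes it below -/
import Mathlib

section
/- Let D > 0 be a real number and let p, q be points of Euclidean 3-space with 0 < dist p q ≤ 2·D. Then there exists a point r in Euclidean 3-space with dist p r = D and dist r q = D. -/
open RealInnerProductSpace


/-- Apex lemma: for D > 0 and points p, q with 0 < dist p q ≤ 2·D, there is a
point r adjacent (at distance exactly D, axiom 5) to both p and q. -/
theorem exists_apex_point
    (D : ℝ) (hD : 0 < D)
    (p q : EuclideanSpace ℝ (Fin 3))
    (h1 : 0 < dist p q) (h2 : dist p q ≤ 2 * D) :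
    ∃ r : EuclideanSpace ℝ (Fin 3), dist p r = D ∧ dist r q = D := by
  set d : ℝ := dist p q with hd
  set v : EuclideanSpace ℝ (Fin 3) := q - p with hv
  have hvnorm : ‖v‖ = d := by rw [hv, ← dist_eq_norm, dist_comm]
  have hK : (ℝ ∙ v)ᗮ ≠ ⊥ := by
    intro h
    have h2' := Submodule.finrank_add_finrank_orthogonal (K := ℝ ∙ v)
    rw [h] at h2'
    simp [finrank_euclideanSpace] at h2'
    have : Module.finrank ℝ ↥(ℝ ∙ v) ≤ 1 := by
      simpa using finrank_span_le_card ({v} : Set (EuclideanSpace ℝ (Fin 3)))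
    omega
  obtain ⟨w, hwK, hwne⟩ := Submodule.exists_mem_ne_zero_of_ne_bot hK
  set u : EuclideanSpace ℝ (Fin 3) := ‖w‖⁻¹ • w with hu
  have hwnorm : ‖w‖ ≠ 0 := norm_ne_zero_iff.mpr hwne
  have hunorm : ‖u‖ = 1 := by
    rw [hu, norm_smul]
    simp [abs_of_nonneg (inv_nonneg.mpr (norm_nonneg w)), inv_mul_cancel₀ hwnorm]
  have huv : ⟪v, u⟫ = 0 := by
    have h0 := hwK v (Submodule.mem_span_singleton_self v)
    rw [hu, real_inner_smul_right, h0, mul_zero]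
  set s : ℝ := Real.sqrt (D ^ 2 - (d / 2) ^ 2) with hs
  have hdle : (d / 2) ^ 2 ≤ D ^ 2 := by nlinarith
  have hs2 : s ^ 2 = D ^ 2 - (d / 2) ^ 2 := Real.sq_sqrt (by linarith)
  have hns : ‖s‖ = s := Real.norm_of_nonneg (Real.sqrt_nonneg _)
  have hnh : ‖(1 / 2 : ℝ)‖ = 1 / 2 := by norm_num
  refine ⟨p + ((1 / 2 : ℝ) • v + s • u), ?_, ?_⟩
  · rw [dist_eq_norm']
    have heq : p + ((1 / 2 : ℝ) • v + s • u) - p = (1 / 2 : ℝ) • v + s • u := by abel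
    rw [heq]
    have hsq : ‖(1 / 2 : ℝ) • v + s • u‖ ^ 2 = D ^ 2 := by
      rw [norm_add_sq_real, real_inner_smul_left, real_inner_smul_right, huv,
        norm_smul, norm_smul, hunorm, hvnorm, hns, hnh]
      nlinarith [hs2]
    rw [← Real.sqrt_sq (norm_nonneg _), hsq, Real.sqrt_sq hD.le]
  · have heq : p + ((1 / 2 : ℝ) • v + s • u) - q = -((1 / 2 : ℝ) • v) + s • u := by
      rw [hv]; module
    rw [dist_eq_norm, heq]
    have hsq : ‖-((1 / 2 : ℝ) • v) + s • u‖ ^ 2 = D ^ 2 := by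
      rw [norm_add_sq_real, inner_neg_left, real_inner_smul_left, real_inner_smul_right, huv,
        norm_neg, norm_smul, norm_smul, hunorm, hvnorm, hns, hnh]
      nlinarith [hs2]
    rw [← Real.sqrt_sq (norm_nonneg _), hsq, Real.sqrt_sq hD.le]
end

section
/- Let D > 0 be a real number and define the adjacency relation Adj on Euclidean 3-space by Adj p q ↔ dist p q = D. Then for any two distinct points p and q of Euclidean 3-space, p and q are related by the transitive closure of Adj; that is, there exist n ≥ 1 and a finite chain p = p₀, p₁, …, pₙ = q of points with dist pᵢ pᵢ₊₁ = D for every i < n. -/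
/-!
Two points at distance at most `2 * D` have a common neighbour at distance `D` from both: the
apex of an isosceles triangle over them, which exists as soon as there is a direction orthogonal
to the base, i.e. in dimension at least 2. Hence the classes of the transitive closure of
`dist · · = D` are open, and a connected space has only one.
-/

open RealInnerProductSpace Module Filter Relation

namespace Relation.TransGen

variable {α : Type*} {r : α → α → Prop} {a b : α}

theorem exists_chain (h : TransGen r a b) :
    ∃ n : ℕ, 1 ≤ n ∧ ∃ f : ℕ → α, f 0 = a ∧ f n = b ∧ ∀ i < n, r (f i) (f (i + 1)) := by
  induction h with
  | @single b hab => exact ⟨1, le_rfl, fun i => if i = 0 then a else b, by simp, by simp, by simpa⟩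
  | @tail b c _ hbc ih =>
    obtain ⟨n, hn, f, hf0, hfn, hf⟩ := ih
    refine ⟨n + 1, by omega, Function.update f (n + 1) c, ?_, by simp, fun i hi => ?_⟩
    · simpa [Function.update_of_ne (Nat.succ_ne_zero n).symm] using hf0
    · rcases Nat.lt_succ_iff_lt_or_eq.mp hi with hi | rfl
      · simpa [Function.update_of_ne (by omega : i ≠ n + 1),
          Function.update_of_ne (by omega : i + 1 ≠ n + 1)] using hf i hi
      · simpa [hfn] using hbc

end Relation.TransGen

section InnerProductSpace

variable {E : Type*} [NormedAddCommGroup E] [InnerProductSpace ℝ E]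

theorem exists_norm_eq_one_inner_eq_zero (hE : 2 ≤ finrank ℝ E) (v : E) :
    ∃ u : E, ‖u‖ = 1 ∧ ⟪u, v⟫ = 0 := by
  have hspan : (ℝ ∙ v) ≠ ⊤ := fun h => by
    have := finrank_span_le_card (R := ℝ) ({v} : Set E)
    rw [h, finrank_top] at this
    simp at this
    omega
  obtain ⟨w, hw, hw0⟩ :=
    Submodule.exists_mem_ne_zero_of_ne_bot (mt Submodule.orthogonal_eq_bot_iff.mp hspan)
  refine ⟨‖w‖⁻¹ • w, by simp [norm_smul, hw0], ?_⟩
  rw [real_inner_smul_left, Submodule.mem_orthogonal_singleton_iff_inner_left.mp hw, mul_zero]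

theorem norm_half_add_smul_sq {u v : E} (hu : ‖u‖ = 1) (huv : ⟪u, v⟫ = 0) (s : ℝ) :
    ‖(2⁻¹ : ℝ) • v + s • u‖ ^ 2 = ‖v‖ ^ 2 / 4 + s ^ 2 := by
  have horth : ⟪(2⁻¹ : ℝ) • v, s • u⟫ = 0 := by
    rw [real_inner_smul_left, real_inner_smul_right, real_inner_comm, huv]; ring
  rw [sq, norm_add_sq_eq_norm_sq_add_norm_sq_real horth, norm_smul, norm_smul, hu,
    Real.norm_eq_abs, Real.norm_eq_abs, abs_of_pos (by norm_num : (0 : ℝ) < 2⁻¹)]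
  nlinarith [abs_mul_abs_self s]

theorem exists_dist_eq_dist_eq (hE : 2 ≤ finrank ℝ E) {D : ℝ} {a b : E} (h : dist a b ≤ 2 * D) :
    ∃ c, dist a c = D ∧ dist c b = D := by
  obtain ⟨u, hu, hub⟩ := exists_norm_eq_one_inner_eq_zero hE (b - a)
  have hD : 0 ≤ D := by linarith [dist_nonneg (x := a) (y := b)]
  have hba : ‖b - a‖ = dist a b := by rw [dist_comm, dist_eq_norm]
  set t := √(D ^ 2 - ‖b - a‖ ^ 2 / 4)
  have ht : t ^ 2 = D ^ 2 - ‖b - a‖ ^ 2 / 4 := Real.sq_sqrt (by nlinarith [norm_nonneg (b - a)])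
  have hleg : ∀ s : ℝ, s ^ 2 = t ^ 2 → ‖(2⁻¹ : ℝ) • (b - a) + s • u‖ = D := fun s hs =>
    (sq_eq_sq₀ (norm_nonneg _) hD).mp (by rw [norm_half_add_smul_sq hu hub, hs, ht]; ring)
  refine ⟨a + ((2⁻¹ : ℝ) • (b - a) + t • u), ?_, ?_⟩
  · rw [dist_comm, dist_eq_norm, add_sub_cancel_left, hleg t rfl]
  · rw [dist_comm, dist_eq_norm, ← hleg (-t) (neg_sq t)]
    congr 1
    module

theorem transGen_dist_eq (hE : 2 ≤ finrank ℝ E) {D : ℝ} (hD : 0 < D) (a b : E) :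
    TransGen (fun x y : E => dist x y = D) a b := by
  refine PreconnectedSpace.induction₂' _ (fun x => ?_) ⟨fun _ _ _ => TransGen.trans⟩ a b
  filter_upwards [Metric.closedBall_mem_nhds x (by positivity : 0 < 2 * D)] with y hy
  obtain ⟨c, hyc, hcx⟩ := exists_dist_eq_dist_eq hE (Metric.mem_closedBall.mp hy)
  exact ⟨.tail (.single (by rwa [dist_comm])) (by rwa [dist_comm]), .tail (.single hyc) hcx⟩

end InnerProductSpace

theorem global_region_fully_connected_general
    (D : ℝ) (hD : 0 < D)
    (p q : EuclideanSpace ℝ (Fin 3)) :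
    Relation.TransGen (fun a b : EuclideanSpace ℝ (Fin 3) => dist a b = D) p q ∧
      ∃ n : ℕ, 1 ≤ n ∧ ∃ f : ℕ → EuclideanSpace ℝ (Fin 3),
        f 0 = p ∧ f n = q ∧ ∀ i < n, dist (f i) (f (i + 1)) = D := by
  have h := transGen_dist_eq (by simp) hD p q
  exact ⟨h, h.exists_chain⟩

/-- For any D > 0, any two distinct points of Euclidean 3-space are related by
the transitive closure of the adjacency relation `dist · · = D` (axiom 8's
`ConnP`); that is, they are joined by a finite chain of length n ≥ 1 of
consecutively adjacent points. The global spatial region is fully connected. -/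
theorem global_region_fully_connected
    (D : ℝ) (hD : 0 < D)
    (p q : EuclideanSpace ℝ (Fin 3)) (hpq : p ≠ q) :
    Relation.TransGen (fun a b : EuclideanSpace ℝ (Fin 3) => dist a b = D) p q ∧
      ∃ n : ℕ, 1 ≤ n ∧ ∃ f : ℕ → EuclideanSpace ℝ (Fin 3),
        f 0 = p ∧ f n = q ∧ ∀ i < n, dist (f i) (f (i + 1)) = D :=
  global_region_fully_connected_general D hD p q
end
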